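/- In the subgame after first-stage bids a ≤ b where the opponent's total bid X has an atom of mass b − a at b and is uniform on (b, a+1] otherwise, the optimal total bids for a player with sunk bid b are exactly: staying at b (payoff b − a) or any total in (b, a+1] (payoff b − a); in particular the supremum of the continuation payoff over all total bids t ≥ b equals b − a, and no total bid t > a + 1 is optimal. -/
import Mathlib


open MeasureTheory Set

/-- The high bidder's continuation payoff from a total bid t, against the opponent's
atom-plus-uniform distribution (atom of mass b − a at b, uniform on (b, a+1] otherwise):
at t = b the high bidder wins ties so the payoff is P(X ≤ b); for t ≠ b it is
P(X < t) − (t − b). -/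
noncomputable def contPayoff (a b t : ℝ) : ℝ :=
  let X : Measure ℝ :=
    ENNReal.ofReal (b - a) • Measure.dirac b + volume.restrict (Ioc b (a + 1))
  if t = b then (X (Iic b)).toReal else (X (Iio t)).toReal - (t - b)

lemma contPayoff_at_b (a b : ℝ) (hab : a ≤ b) : contPayoff a b b = b - a := by
  unfold contPayoff
  simp only [if_pos rfl]
  rw [Measure.add_apply, Measure.smul_apply, Measure.restrict_apply measurableSet_Iic,
    Measure.dirac_apply' _ measurableSet_Iic]
  have h1 : Iic b ∩ Ioc b (a + 1) = ∅ := by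
    ext x; simp only [mem_inter_iff, mem_Iic, mem_Ioc, mem_empty_iff_false, iff_false]
    rintro ⟨h1, h2, _⟩; linarith
  have h2 : (Iic b).indicator (1 : ℝ → ENNReal) b = 1 := by
    simp [indicator, mem_Iic]
  rw [h1, h2]
  simp [ENNReal.toReal_ofReal (by linarith : (0:ℝ) ≤ b - a)]

lemma contPayoff_mid (a b t : ℝ) (hab : a ≤ b) (h1 : b < t) (h2 : t ≤ a + 1) :
    contPayoff a b t = b - a := by
  unfold contPayoff
  rw [if_neg (by linarith : t ≠ b)]
  rw [Measure.add_apply, Measure.smul_apply, Measure.restrict_apply measurableSet_Iio,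
    Measure.dirac_apply' _ measurableSet_Iio]
  have hI : Iio t ∩ Ioc b (a + 1) = Ioo b t := by
    ext x
    simp only [mem_inter_iff, mem_Iio, mem_Ioc, mem_Ioo]
    constructor
    · rintro ⟨hx, hx1, _⟩; exact ⟨hx1, hx⟩
    · rintro ⟨hx1, hx2⟩; exact ⟨hx2, hx1, by linarith⟩
  have hind : (Iio t).indicator (1 : ℝ → ENNReal) b = 1 := by
    simp [indicator, mem_Iio, h1]
  rw [hI, hind, Real.volume_Ioo]
  rw [smul_eq_mul, mul_one,
    ENNReal.toReal_add ENNReal.ofReal_ne_top ENNReal.ofReal_ne_top,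
    ENNReal.toReal_ofReal (by linarith : (0:ℝ) ≤ b - a),
    ENNReal.toReal_ofReal (by linarith : (0:ℝ) ≤ t - b)]
  ring

lemma contPayoff_high (a b t : ℝ) (hab : a ≤ b) (hb1 : b ≤ a + 1) (h1 : a + 1 < t) :
    contPayoff a b t = 1 - (t - b) := by
  unfold contPayoff
  rw [if_neg (by linarith : t ≠ b)]
  rw [Measure.add_apply, Measure.smul_apply, Measure.restrict_apply measurableSet_Iio,
    Measure.dirac_apply' _ measurableSet_Iio]
  have hI : Iio t ∩ Ioc b (a + 1) = Ioc b (a + 1) := by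
    apply inter_eq_self_of_subset_right
    intro x hx
    simp only [mem_Ioc] at hx
    simp only [mem_Iio]; linarith [hx.2]
  have hind : (Iio t).indicator (1 : ℝ → ENNReal) b = 1 := by
    simp [indicator, mem_Iio]; linarith
  rw [hI, hind, Real.volume_Ioc]
  rw [smul_eq_mul, mul_one,
    ENNReal.toReal_add ENNReal.ofReal_ne_top ENNReal.ofReal_ne_top,
    ENNReal.toReal_ofReal (by linarith : (0:ℝ) ≤ b - a),
    ENNReal.toReal_ofReal (by linarith : (0:ℝ) ≤ a + 1 - b)]
  ring

/-- Optimal total bids of the high bidder are exactly {b} ∪ (b, a+1], each giving payoff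
b − a; the supremum of the payoff over all total bids t ≥ b equals b − a; and no total bid
t > a + 1 is optimal. -/
theorem high_bidder_optimal_bids (a b : ℝ) (h0 : 0 ≤ a) (hab : a ≤ b) (hb : b ≤ 1) :
    (∀ t ∈ ({b} : Set ℝ) ∪ Ioc b (a + 1), contPayoff a b t = b - a) ∧
    sSup (contPayoff a b '' Ici b) = b - a ∧
    (∀ t : ℝ, a + 1 < t → contPayoff a b t < b - a) := by
  have hb1 : b ≤ a + 1 := by linarith
  have hall : ∀ t ∈ ({b} : Set ℝ) ∪ Ioc b (a + 1), contPayoff a b t = b - a := by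
    rintro t (ht | ht)
    · rw [mem_singleton_iff] at ht; rw [ht]; exact contPayoff_at_b a b hab
    · exact contPayoff_mid a b t hab ht.1 ht.2
  have hhigh : ∀ t : ℝ, a + 1 < t → contPayoff a b t < b - a := by
    intro t ht
    rw [contPayoff_high a b t hab hb1 ht]
    linarith
  refine ⟨hall, ?_, hhigh⟩
  apply IsGreatest.csSup_eq
  constructor
  · exact ⟨b, self_mem_Ici, contPayoff_at_b a b hab⟩
  · rintro y ⟨t, ht, rfl⟩
    rcases eq_or_lt_of_le (mem_Ici.mp ht) with h | h
    · rw [← h, contPayoff_at_b a b hab]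
    · rcases le_or_gt t (a + 1) with h2 | h2
      · rw [contPayoff_mid a b t hab h h2]
      · exact le_of_lt (hhigh t h2)
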